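/- arXiv:0704.3819 — 2 statements merged into one kernel-verified Lean document; each statement's English description precedes it below -/
import Mathlib

section
/- Let a be a nonzero complex number, m a positive integer, N a positive integer, and f ∈ C[t,t^{-1}] of the form f = t^ε g with g ∈ C[t^m, t^{-m}] and 0 ≤ ε ≤ m-1. Then f lies in the ideal (t-a)^N C[t,t^{-1}] if and only if f lies in t^ε (t^m - a^m)^N C[t^m, t^{-m}]. -/
/-!
Up to the unit `T (m * n)`, a Laurent polynomial supported on `mℤ` is `Q(X^m)` for a polynomial
`Q`, and since `a ≠ 0`, divisibility by `(X - a)^N` is the same for polynomials and Laurent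
polynomials. Writing `X^m - a^m = (X - a) S`, we have `S(a) = m a^(m-1) ≠ 0`, so `X - a` divides
`Q(X^m)` exactly as often as `X - a^m` divides `Q`.
-/

open LaurentPolynomial

namespace Polynomial

theorem expand_contract_of_forall_mem_support_dvd {R : Type*} [CommSemiring R] {m : ℕ}
    (hm : m ≠ 0) {P : R[X]} (hP : ∀ k ∈ P.support, m ∣ k) : expand R m (contract m P) = P := by
  ext n
  rw [coeff_expand (Nat.pos_of_ne_zero hm), coeff_contract hm]
  split_ifs with h
  · rw [Nat.div_mul_cancel h]
  · exact (notMem_support_iff.mp fun hn => h (hP n hn)).symm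

variable {R : Type*} [CommRing R] [IsDomain R] {a : R}

theorem not_X_sub_C_dvd_X_pow (ha : a ≠ 0) (k : ℕ) : ¬ X - C a ∣ (X ^ k : R[X]) := by
  simpa [dvd_iff_isRoot] using pow_ne_zero k ha

theorem exists_X_pow_sub_C_pow_eq_X_sub_C_mul_not_dvd (ha : a ≠ 0) {m : ℕ} (hm : (m : R) ≠ 0) :
    ∃ S : R[X], X ^ m - C (a ^ m) = (X - C a) * S ∧ ¬ X - C a ∣ S := by
  obtain ⟨S, hS⟩ : X - C a ∣ X ^ m - C (a ^ m) := by
    simpa only [map_pow] using sub_dvd_pow_sub_pow X (C a) m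
  refine ⟨S, hS, ?_⟩
  -- differentiating `hS` and evaluating at `a` gives `S.eval a = m * a ^ (m - 1)`
  have hSa := congrArg (fun p => (derivative p).eval a) hS
  simp only [derivative_sub, derivative_X_pow, derivative_C, sub_zero, derivative_mul,
    derivative_X, one_mul, eval_mul, eval_C, eval_pow, eval_X, eval_add, eval_sub, sub_self,
    zero_mul, add_zero] at hSa
  rw [dvd_iff_isRoot, IsRoot, ← hSa]
  exact mul_ne_zero hm (pow_ne_zero _ ha)

theorem pow_X_sub_C_dvd_expand_iff (ha : a ≠ 0) {m : ℕ} (hm : (m : R) ≠ 0) (N : ℕ) (Q : R[X]) :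
    (X - C a) ^ N ∣ expand R m Q ↔ (X - C (a ^ m)) ^ N ∣ Q := by
  obtain ⟨S, hS, hSa⟩ := exists_X_pow_sub_C_pow_eq_X_sub_C_mul_not_dvd ha hm
  have hexpand : expand R m (X - C (a ^ m)) = (X - C a) * S := by
    rw [map_sub, expand_X, expand_C, hS]
  refine ⟨fun hdvd => ?_, fun ⟨Q', hQ'⟩ => ?_⟩
  · induction N generalizing Q with
    | zero => simp
    | succ N ih =>
      have hroot : Q.IsRoot (a ^ m) := by
        simpa [dvd_iff_isRoot, expand_eval] using (dvd_pow_self _ N.succ_ne_zero).trans hdvd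
      obtain ⟨Q', rfl⟩ := dvd_iff_isRoot.mpr hroot
      rw [map_mul, hexpand, mul_assoc, pow_succ', mul_dvd_mul_iff_left (X_sub_C_ne_zero a)] at hdvd
      rw [pow_succ']
      exact mul_dvd_mul_left _ (ih Q' ((prime_X_sub_C a).pow_dvd_of_dvd_mul_left N hSa hdvd))
  · rw [hQ', map_mul, map_pow, hexpand, mul_pow]
    exact (dvd_mul_right _ _).mul_right _

theorem toLaurent_pow_X_sub_C_dvd_toLaurent_iff (ha : a ≠ 0) (N : ℕ) (p : R[X]) :
    toLaurent ((X - C a) ^ N) ∣ toLaurent p ↔ (X - C a) ^ N ∣ p := by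
  refine ⟨fun ⟨s, hs⟩ => ?_, _root_.map_dvd toLaurent⟩
  obtain ⟨k, r, hr⟩ := exists_T_pow s
  have hpX : p * X ^ k = (X - C a) ^ N * r :=
    toLaurent_injective (by simp only [map_mul, toLaurent_X_pow, hs, hr, mul_assoc])
  exact (prime_X_sub_C a).pow_dvd_of_dvd_mul_right N (not_X_sub_C_dvd_X_pow ha k) ⟨r, hpX⟩

end Polynomial

namespace LaurentPolynomial

open Polynomial

section Semiring

variable {R : Type*} [Semiring R]

theorem coeff_mul_T (f : R[T;T⁻¹]) (n k : ℤ) : (f * T n).coeff k = f.coeff (k - n) :=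
  (AddMonoidAlgebra.coeff_mul_single_apply f 1 n k).trans (mul_one _)

theorem forall_mem_support_mul_T_dvd_iff {m n : ℤ} (hn : m ∣ n) (f : R[T;T⁻¹]) :
    (∀ k ∈ (f * T n).coeff.support, m ∣ k) ↔ ∀ k ∈ f.coeff.support, m ∣ k := by
  simp only [Finsupp.mem_support_iff, coeff_mul_T]
  refine ⟨fun h k hk => ?_, fun h k hk => (dvd_sub_left hn).mp (h _ hk)⟩
  exact (dvd_add_left hn).mp (h (k + n) (by rwa [add_sub_cancel_right]))

end Semiring

section CommSemiring

variable {R : Type*} [CommSemiring R]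

theorem forall_mem_support_toLaurent_expand_dvd {m : ℕ} (hm : m ≠ 0) (Q : R[X]) :
    ∀ k ∈ (toLaurent (expand R m Q)).coeff.support, (m : ℤ) ∣ k := by
  simp only [support_coeff_toLaurent, Finset.mem_map, Nat.castEmbedding_apply]
  rintro _ ⟨j, hj, rfl⟩
  rw [mem_support_iff, coeff_expand (Nat.pos_of_ne_zero hm)] at hj
  exact Int.natCast_dvd_natCast.mpr (of_not_not fun h => hj (if_neg h))

theorem exists_eq_toLaurent_expand_mul_T {m : ℕ} (hm : m ≠ 0) {g : R[T;T⁻¹]}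
    (hg : ∀ k ∈ g.coeff.support, (m : ℤ) ∣ k) :
    ∃ (n : ℤ) (Q : R[X]), g = toLaurent (expand R m Q) * T (m * n) := by
  obtain ⟨n, P, hP⟩ := exists_T_pow g
  set P' := P * X ^ ((m - 1) * n)
  have hP' : toLaurent P' = g * T (m * n) := by
    rw [map_mul, toLaurent_X_pow, hP, mul_T_assoc]
    congr 2
    push_cast [Nat.cast_sub (Nat.one_le_iff_ne_zero.mpr hm)]
    ring
  have hP'supp : ∀ k ∈ P'.support, m ∣ k := fun k hk => by
    have := (forall_mem_support_mul_T_dvd_iff (dvd_mul_right (m : ℤ) n) g).mpr hg k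
    rw [← hP', support_coeff_toLaurent] at this
    exact Int.natCast_dvd_natCast.mp (this (Finset.mem_map_of_mem _ hk))
  refine ⟨-n, contract m P', ?_⟩
  rw [expand_contract_of_forall_mem_support_dvd hm hP'supp, hP', mul_T_assoc]
  simp

end CommSemiring

variable {R : Type*} [CommRing R] [IsDomain R] {a : R}

theorem pow_T_one_sub_C_dvd_iff (ha : a ≠ 0) {m : ℕ} (hm : (m : R) ≠ 0) (N : ℕ)
    {g : R[T;T⁻¹]} (hg : ∀ k ∈ g.coeff.support, (m : ℤ) ∣ k) :
    (T 1 - C a) ^ N ∣ g ↔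
      ∃ h : R[T;T⁻¹], (∀ k ∈ h.coeff.support, (m : ℤ) ∣ k) ∧ g = (T m - C (a ^ m)) ^ N * h := by
  refine ⟨fun hdvd => ?_, ?_⟩
  · have hm0 : m ≠ 0 := by rintro rfl; exact hm Nat.cast_zero
    obtain ⟨n, Q, rfl⟩ := exists_eq_toLaurent_expand_mul_T hm0 hg
    have hX : T 1 - C a = toLaurent (X - Polynomial.C a) := by simp
    rw [(isUnit_T _).dvd_mul_right, hX, ← map_pow, toLaurent_pow_X_sub_C_dvd_toLaurent_iff ha,
      pow_X_sub_C_dvd_expand_iff ha hm] at hdvd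
    obtain ⟨Q', rfl⟩ := hdvd
    refine ⟨toLaurent (expand R m Q') * T (m * n),
      (forall_mem_support_mul_T_dvd_iff (dvd_mul_right _ _) _).mpr
        (forall_mem_support_toLaurent_expand_dvd hm0 Q'), ?_⟩
    simp only [map_mul, map_pow, map_sub, expand_X, expand_C, toLaurent_X, T_pow, toLaurent_C,
      mul_one, mul_assoc]
  · rintro ⟨h, -, rfl⟩
    have hdvd : T 1 - C a ∣ (T m - C (a ^ m) : R[T;T⁻¹]) := by
      simpa [← map_pow, T_pow] using sub_dvd_pow_sub_pow (T 1 : R[T;T⁻¹]) (C a) m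
    exact (pow_dvd_pow_of_dvd hdvd N).mul_right h

end LaurentPolynomial

theorem stmt3_general (a : ℂ) (ha : a ≠ 0) (m N : ℕ) (hm : 0 < m)
    (ε : ℕ) (gp : LaurentPolynomial ℂ)
    (hgp : ∀ k ∈ gp.coeff.support, (m : ℤ) ∣ k) (f : LaurentPolynomial ℂ)
    (hf : f = T (ε : ℤ) * gp) :
    f ∈ Ideal.span {(T 1 - C a) ^ N} ↔
      ∃ h : LaurentPolynomial ℂ, (∀ k ∈ h.coeff.support, (m : ℤ) ∣ k) ∧
        f = T (ε : ℤ) * (T (m : ℤ) - C (a ^ m)) ^ N * h := by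
  subst hf
  rw [Ideal.mem_span_singleton, (isUnit_T _).dvd_mul_left,
    pow_T_one_sub_C_dvd_iff ha (Nat.cast_ne_zero.mpr hm.ne') N hgp]
  simp only [mul_assoc, (isUnit_T _).mul_right_inj]

/-- Let `a ≠ 0`, `m, N > 0`, and `f = t^ε g` with `g ∈ ℂ[tᵐ,t⁻ᵐ]` and
`0 ≤ ε ≤ m - 1`.  Then `f ∈ (t-a)^N ℂ[t,t⁻¹]` iff `f ∈ t^ε (tᵐ - aᵐ)^N ℂ[tᵐ,t⁻ᵐ]`. -/
theorem stmt3 (a : ℂ) (ha : a ≠ 0) (m N : ℕ) (hm : 0 < m) (hN : 0 < N)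
    (ε : ℕ) (hε : ε ≤ m - 1) (gp : LaurentPolynomial ℂ)
    (hgp : ∀ k ∈ gp.coeff.support, (m : ℤ) ∣ k) (f : LaurentPolynomial ℂ)
    (hf : f = T (ε : ℤ) * gp) :
    f ∈ Ideal.span {(T 1 - C a) ^ N} ↔
      ∃ h : LaurentPolynomial ℂ, (∀ k ∈ h.coeff.support, (m : ℤ) ∣ k) ∧
        f = T (ε : ℤ) * (T (m : ℤ) - C (a ^ m)) ^ N * h :=
  stmt3_general a ha m N hm ε gp hgp f hf
end

section
/- Let a_1, ..., a_ℓ be nonzero complex numbers such that a_1^m, ..., a_ℓ^m are pairwise distinct (hence a_1, ..., a_ℓ are pairwise distinct), and N ∈ Z_+. With 𝔤^σ_{b,N} denoting the quotient of L^σ(𝔤) by ⊕_ε 𝔤_ε ⊗ t^{m-ε}(t^m - b)^N C[t^m,t^{-m}], there is a Lie algebra isomorphism 𝔤^σ_{(a_1^m,...,a_ℓ^m), N} ≅ ⊕_{i=1}^ℓ 𝔤^σ_{a_i^m, N}, where 𝔤^σ_{(a_1^m,...,a_ℓ^m),N} is the quotient of L^σ(𝔤) by ⊕_ε 𝔤_ε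 ⊗ t^{m-ε} ∏_{k=1}^ℓ (t^m - a_k^m)^N C[t^m, t^{-m}]. -/
open scoped TensorProduct
open LaurentPolynomial

noncomputable section

/-- The loop algebra `L(g) = g ⊗ ℂ[t,t⁻¹]` (realized as `ℂ[t,t⁻¹] ⊗[ℂ] g`), with bracket
`⁅x ⊗ tʳ, y ⊗ tˢ⁆ = ⁅x,y⁆ ⊗ t^{r+s}`. -/
abbrev Loop (g : Type*) [LieRing g] [LieAlgebra ℂ g] : Type _ := LaurentPolynomial ℂ ⊗[ℂ] g

instance (g : Type*) [LieRing g] [LieAlgebra ℂ g] : LieAlgebra ℂ (Loop g) :=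
  { (inferInstance : Module ℂ (Loop g)) with
    lie_smul := fun t x y => by
      rw [← algebraMap_smul (LaurentPolynomial ℂ) t y,
        ← algebraMap_smul (LaurentPolynomial ℂ) t ⁅x, y⁆]
      exact LieAlgebra.lie_smul _ x y }

variable {g : Type*} [LieRing g] [LieAlgebra ℂ g]

/-- The `μ`-eigenspace of an automorphism `σ` of `g`; for `μ = ζ^ε` this is the piece
`g_ε` of the eigenspace decomposition. -/
def eig (σ : g ≃ₗ⁅ℂ⁆ g) (μ : ℂ) : Submodule ℂ g :=
  Module.End.eigenspace (σ.toLinearEquiv : g →ₗ[ℂ] g) μ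

/-- The subset `⋃_ε { g_ε ⊗ t^{mk-ε} : k ∈ ℤ }` of `L(g)`, whose span is the twisted loop
algebra `L^σ(g) = ⊕_{ε=0}^{m-1} g_ε ⊗ t^{m-ε} ℂ[tᵐ,t⁻ᵐ]`. -/
def twistedSet (m : ℕ) (σ : g ≃ₗ⁅ℂ⁆ g) (ζ : ℂ) : Set (Loop g) :=
  {z | ∃ (ε : Fin m) (k : ℤ) (x : g), x ∈ eig σ (ζ ^ (ε : ℕ)) ∧
    z = (T ((m : ℤ) * k - ((ε : ℕ) : ℤ)) : LaurentPolynomial ℂ) ⊗ₜ[ℂ] x}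

/-- The twisted loop algebra `L^σ(g) = ⊕_{ε=0}^{m-1} g_ε ⊗ t^{m-ε} ℂ[tᵐ,t⁻ᵐ]`, the
fixed-point subalgebra of `σ̃(x ⊗ tᵏ) = ζᵏ σ(x) ⊗ tᵏ`. -/
def twistedLoop (m : ℕ) (σ : g ≃ₗ⁅ℂ⁆ g) (ζ : ℂ) : LieSubalgebra ℂ (Loop g) :=
  LieSubalgebra.lieSpan ℂ (Loop g) (twistedSet m σ ζ)

/-- The subset `⋃_ε { g_ε ⊗ t^{mk-ε}·q : k ∈ ℤ }` of `L(g)`; for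
`q = ∏ (tᵐ - aᵣᵐ)^N` its span is the ideal `⊕_ε g_ε ⊗ t^{m-ε} ∏ (tᵐ-aᵣᵐ)^N ℂ[tᵐ,t⁻ᵐ]`
of `L^σ(g)`. -/
def twistedIdealSet (m : ℕ) (σ : g ≃ₗ⁅ℂ⁆ g) (ζ : ℂ) (q : LaurentPolynomial ℂ) :
    Set (Loop g) :=
  {z | ∃ (ε : Fin m) (k : ℤ) (x : g), x ∈ eig σ (ζ ^ (ε : ℕ)) ∧
    z = ((T ((m : ℤ) * k - ((ε : ℕ) : ℤ)) : LaurentPolynomial ℂ) * q) ⊗ₜ[ℂ] x}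

/-- The ideal `⊕_ε g_ε ⊗ t^{m-ε}·q·ℂ[tᵐ,t⁻ᵐ]` of the twisted loop algebra `L^σ(g)`. -/
def twistedIdeal (m : ℕ) (σ : g ≃ₗ⁅ℂ⁆ g) (ζ : ℂ) (q : LaurentPolynomial ℂ) :
    LieIdeal ℂ ↥(twistedLoop m σ ζ) :=
  LieSubmodule.lieSpan ℂ ↥(twistedLoop m σ ζ)
    {z : ↥(twistedLoop m σ ζ) |
      (z : Loop g) ∈ Submodule.span ℂ (twistedIdealSet m σ ζ q)}

/-- The Lie ideal `g ⊗ f·ℂ[t,t⁻¹]` of the loop algebra, for `f ∈ ℂ[t,t⁻¹]`. -/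
def loopIdeal (f : LaurentPolynomial ℂ) : LieIdeal ℂ (Loop g) :=
  LieSubmodule.lieSpan ℂ (Loop g)
    {z | ∃ (p : LaurentPolynomial ℂ) (x : g), p ∈ Ideal.span {f} ∧ z = p ⊗ₜ[ℂ] x}


/-! Multiplication by polynomials in `tᵐ` preserves `L^σ(g)`, and the ideal attached to `q` is
`q · L^σ(g)`. The polynomials `Qᵣ = (X - aᵣᵐ)^N` are pairwise coprime in `ℂ[X]`, so there are `Eᵣ`
with `Eᵣ ≡ δᵣₛ mod Qₛ`. Under `X ↦ tᵐ`, multiplication by `Eᵣ` inverts the diagonal map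
`L^σ(g)/∏ Qᵣ ↦ ⊕ᵣ L^σ(g)/Qᵣ`, as in the Chinese remainder theorem. -/

open scoped Pointwise DirectSum Function

theorem lie_mem_eig (σ : g ≃ₗ⁅ℂ⁆ g) {μ ν : ℂ} {x y : g} (hx : x ∈ eig σ μ) (hy : y ∈ eig σ ν) :
    ⁅x, y⁆ ∈ eig σ (μ * ν) := by
  rw [eig, Module.End.mem_eigenspace_iff] at hx hy ⊢
  change σ ⁅x, y⁆ = _
  rw [LieEquiv.map_lie, show σ x = μ • x from hx, show σ y = ν • y from hy, smul_lie, lie_smul,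
    smul_smul]

theorem Submodule.aeval_smul_mem {R A M : Type*} [CommSemiring R] [Semiring A] [Algebra R A]
    [AddCommMonoid M] [Module R M] [Module A M] [IsScalarTower R A M] {S : Submodule R M}
    {a : A} (ha : ∀ x ∈ S, a • x ∈ S) (p : Polynomial R) {x : M} (hx : x ∈ S) :
    Polynomial.aeval a p • x ∈ S := by
  induction p using Polynomial.induction_on' with
  | add p q hp hq => rw [map_add, add_smul]; exact S.add_mem hp hq
  | monomial n c =>
    have hpow : a ^ n • x ∈ S := by
      induction n with
      | zero => rwa [pow_zero, one_smul]
      | succ n ih => rw [pow_succ', mul_smul]; exact ha _ ih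
    rw [Polynomial.aeval_monomial, mul_smul, algebraMap_smul]
    exact S.smul_mem c hpow

namespace LieIdeal

variable {R L : Type*} [CommRing R] [LieRing L] [LieAlgebra R L]

def factor {I J : LieIdeal R L} (h : I ≤ J) : L ⧸ I →ₗ⁅R⁆ L ⧸ J :=
  { Submodule.factor (p := I.toSubmodule) (p' := J.toSubmodule) h with
    map_lie' := by
      rintro ⟨x⟩ ⟨y⟩
      exact LieSubmodule.Quotient.mk_bracket J x y }

end LieIdeal

namespace LieHom

variable {R K ι : Type*} {L : ι → Type*} [CommRing R] [LieRing K] [LieAlgebra R K] [Fintype ι]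
  [∀ i, LieRing (L i)] [∀ i, LieAlgebra R (L i)]

def toDirectSum (f : ∀ i, K →ₗ⁅R⁆ L i) : K →ₗ⁅R⁆ ⨁ i, L i where
  toFun x := DFinsupp.equivFunOnFintype.symm fun i => f i x
  map_add' x y := by ext i; exact map_add (f i) x y
  map_smul' c x := by ext i; exact map_smul (f i) c x
  map_lie' {x y} := by ext i; rw [DirectSum.bracket_apply]; exact (f i).map_lie x y

end LieHom

theorem exists_forall_dvd_sub_ite {R ι : Type*} [CommRing R] [Finite ι] [DecidableEq ι]
    {Q : ι → R} (hQ : Pairwise (IsCoprime on Q)) :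
    ∃ E : ι → R, ∀ r s, Q s ∣ E r - if r = s then 1 else 0 := by
  have hI : Pairwise (IsCoprime on fun i => Ideal.span {Q i}) := fun i j hij =>
    (Ideal.isCoprime_span_singleton_iff _ _).2 (hQ hij)
  choose E hE using fun r => Ideal.exists_forall_sub_mem_ideal hI fun s => if r = s then 1 else 0
  exact ⟨E, fun r s => Ideal.mem_span_singleton.1 (hE r s)⟩

abbrev aevalTPow (m : ℕ) : Polynomial ℂ →ₐ[ℂ] LaurentPolynomial ℂ :=
  Polynomial.aeval (T m)

section TwistedLoop

variable {m : ℕ} {σ : g ≃ₗ⁅ℂ⁆ g} {ζ : ℂ}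

theorem T_smul_mem_twistedSet {z : Loop g} (hz : z ∈ twistedSet m σ ζ) :
    (T m : LaurentPolynomial ℂ) • z ∈ twistedSet m σ ζ := by
  obtain ⟨ε, k, x, hx, rfl⟩ := hz
  refine ⟨ε, k + 1, x, hx, ?_⟩
  rw [TensorProduct.smul_tmul', smul_eq_mul, ← T_add]
  ring_nf

theorem lie_mem_twistedSet (hζ : ζ ^ m = 1) {z w : Loop g} (hz : z ∈ twistedSet m σ ζ)
    (hw : w ∈ twistedSet m σ ζ) : ⁅z, w⁆ ∈ twistedSet m σ ζ := by
  obtain ⟨ε, k, x, hx, rfl⟩ := hz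
  obtain ⟨ε', k', y, hy, rfl⟩ := hw
  have hm : 0 < m := ε.pos
  set n := (ε : ℕ) + ε'
  -- the exponents add up to `ε + ε'`, which is reduced mod `m` at the cost of a shift in `k`
  have hζn : ζ ^ (ε : ℕ) * ζ ^ (ε' : ℕ) = ζ ^ (n % m) := by
    rw [← pow_add]; exact pow_eq_pow_mod n hζ
  refine ⟨⟨n % m, Nat.mod_lt n hm⟩, k + k' - (n / m : ℕ), ⁅x, y⁆,
    hζn ▸ lie_mem_eig σ hx hy, ?_⟩
  rw [LieAlgebra.ExtendScalars.bracket_tmul, ← T_add]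
  have hdiv : (n : ℤ) = m * (n / m : ℕ) + (n % m : ℕ) := mod_cast (Nat.div_add_mod n m).symm
  congr 2
  push_cast [n] at hdiv ⊢
  linarith

theorem twistedLoop_toSubmodule (hζ : ζ ^ m = 1) :
    (twistedLoop m σ ζ).toSubmodule = Submodule.span ℂ (twistedSet m σ ζ) := by
  refine le_antisymm ?_ LieSubalgebra.submodule_span_le_lieSpan
  obtain ⟨K, hK⟩ := (Submodule.span ℂ (twistedSet m σ ζ)).exists_lieSubalgebra_coe_eq_iff.2
    fun x y hx hy => by
      induction hx, hy using Submodule.span_induction₂ with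
      | mem_mem x y hx hy => exact Submodule.subset_span (lie_mem_twistedSet hζ hx hy)
      | zero_left y _ => rw [zero_lie]; exact Submodule.zero_mem _
      | zero_right x _ => rw [lie_zero]; exact Submodule.zero_mem _
      | add_left x y z _ _ _ hx hy => rw [add_lie]; exact Submodule.add_mem _ hx hy
      | add_right x y z _ _ _ hy hz => rw [lie_add]; exact Submodule.add_mem _ hy hz
      | smul_left c x y _ _ h => rw [smul_lie]; exact Submodule.smul_mem _ c h
      | smul_right c x y _ _ h => rw [lie_smul]; exact Submodule.smul_mem _ c h
  rw [← hK, LieSubalgebra.toSubmodule_le_toSubmodule, twistedLoop, LieSubalgebra.lieSpan_le]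
  rw [← LieSubalgebra.coe_toSubmodule, hK]
  exact Submodule.subset_span

theorem aeval_smul_mem_twistedLoop (hζ : ζ ^ m = 1) (p : Polynomial ℂ) {z : Loop g}
    (hz : z ∈ twistedLoop m σ ζ) : aevalTPow m p • z ∈ twistedLoop m σ ζ := by
  rw [← LieSubalgebra.mem_toSubmodule, twistedLoop_toSubmodule hζ] at hz ⊢
  have hT : (T m : LaurentPolynomial ℂ) • Submodule.span ℂ (twistedSet m σ ζ) ≤
      Submodule.span ℂ (twistedSet m σ ζ) := by
    rw [← Submodule.span_smul]
    exact Submodule.span_mono (Set.smul_set_subset_iff.2 fun _ => T_smul_mem_twistedSet)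
  exact Submodule.aeval_smul_mem (fun x hx => hT (Submodule.smul_mem_pointwise_smul _ _ _ hx))
    p hz

theorem twistedIdealSet_eq_smul (q : LaurentPolynomial ℂ) :
    twistedIdealSet m σ ζ q = q • twistedSet m σ ζ := by
  ext z
  rw [Set.mem_smul_set]
  constructor
  · rintro ⟨ε, k, x, hx, rfl⟩
    exact ⟨_, ⟨ε, k, x, hx, rfl⟩, by rw [TensorProduct.smul_tmul', smul_eq_mul, mul_comm]⟩
  · rintro ⟨_, ⟨ε, k, x, hx, rfl⟩, rfl⟩
    exact ⟨ε, k, x, hx, by rw [TensorProduct.smul_tmul', smul_eq_mul, mul_comm]⟩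

theorem mem_twistedIdeal_iff (hζ : ζ ^ m = 1) {q : LaurentPolynomial ℂ} {z : twistedLoop m σ ζ} :
    z ∈ twistedIdeal m σ ζ q ↔ (z : Loop g) ∈ q • (twistedLoop m σ ζ).toSubmodule := by
  set p : Submodule ℂ (twistedLoop m σ ζ) :=
    (q • (twistedLoop m σ ζ).toSubmodule).comap (twistedLoop m σ ζ).incl.toLinearMap
  obtain ⟨I, hI⟩ := (p.exists_lieSubmodule_coe_eq_iff (twistedLoop m σ ζ)).2 fun x z hz => by
    obtain ⟨w, hw, hzw⟩ := Submodule.mem_smul_pointwise_iff_exists _ _ _ |>.1 hz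
    refine Submodule.mem_smul_pointwise_iff_exists _ _ _ |>.2 ⟨⁅(x : Loop g), w⁆, ?_, ?_⟩
    · exact (twistedLoop m σ ζ).lie_mem x.2 hw
    · change q • w = (z : Loop g) at hzw
      change _ = ⁅(x : Loop g), (z : Loop g)⁆
      rw [← hzw]
      exact (lie_smul q (x : Loop g) w).symm
  have hIdeal : twistedIdeal m σ ζ q = I := by
    rw [twistedIdeal, twistedIdealSet_eq_smul, Submodule.span_smul, ← twistedLoop_toSubmodule hζ]
    have hset : {z : twistedLoop m σ ζ | (z : Loop g) ∈ q • (twistedLoop m σ ζ).toSubmodule} =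
        (I : Set (twistedLoop m σ ζ)) := by
      rw [← LieSubmodule.coe_toSubmodule, hI]
      rfl
    rw [hset, LieSubmodule.lieSpan_eq]
  rw [hIdeal, ← LieSubmodule.mem_toSubmodule, hI]
  rfl

end TwistedLoop

section ChineseRemainder

variable {R ι : Type*} [CommRing R] [Fintype ι] [DecidableEq ι] {Q E : ι → R}

theorem prod_dvd_sum_sub_one (hQ : Pairwise (IsCoprime on Q))
    (hE : ∀ r s, Q s ∣ E r - if r = s then 1 else 0) : ∏ r, Q r ∣ ∑ r, E r - 1 :=
  Fintype.prod_dvd_of_coprime hQ fun s => by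
    have hsum : ∑ r, E r - 1 = ∑ r, (E r - if r = s then 1 else 0) := by
      rw [Finset.sum_sub_distrib, Finset.sum_ite_eq', if_pos (Finset.mem_univ s)]
    rw [hsum]
    exact Finset.dvd_sum fun r _ => hE r s

theorem prod_dvd_mul (hQ : Pairwise (IsCoprime on Q))
    (hE : ∀ r s, Q s ∣ E r - if r = s then 1 else 0) (r : ι) : ∏ s, Q s ∣ E r * Q r :=
  Fintype.prod_dvd_of_coprime hQ fun s => by
    rcases eq_or_ne r s with rfl | hrs
    · exact dvd_mul_left _ _
    · simpa [hrs] using (hE r s).mul_right (Q r)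

end ChineseRemainder

section TwistedQuotient

variable {m : ℕ} {σ : g ≃ₗ⁅ℂ⁆ g} {ζ : ℂ} (hζ : ζ ^ m = 1)
include hζ

theorem aeval_smul_mem_smul_twistedLoop_of_dvd {p q : Polynomial ℂ} (hqp : q ∣ p)
    (z : twistedLoop m σ ζ) :
    aevalTPow m p • (z : Loop g) ∈ aevalTPow m q • (twistedLoop m σ ζ).toSubmodule := by
  obtain ⟨c, rfl⟩ := hqp
  rw [map_mul, mul_smul]
  exact Submodule.smul_mem_pointwise_smul _ _ _ (aeval_smul_mem_twistedLoop hζ c z.2)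

theorem twistedIdeal_aeval_le_of_dvd {p q : Polynomial ℂ} (hqp : q ∣ p) :
    twistedIdeal m σ ζ (aevalTPow m p) ≤ twistedIdeal m σ ζ (aevalTPow m q) := fun z hz => by
  rw [mem_twistedIdeal_iff hζ] at hz ⊢
  obtain ⟨w, hw, hwz⟩ := (Submodule.mem_smul_pointwise_iff_exists _ _ _).1 hz
  rw [← hwz]
  exact aeval_smul_mem_smul_twistedLoop_of_dvd hζ hqp ⟨w, hw⟩

variable {ι : Type*} [Fintype ι]

variable (σ) in
def twistedQuotientToDirectSum (Q : ι → Polynomial ℂ) :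
    twistedLoop m σ ζ ⧸ twistedIdeal m σ ζ (aevalTPow m (∏ r, Q r)) →ₗ⁅ℂ⁆
      ⨁ r, twistedLoop m σ ζ ⧸ twistedIdeal m σ ζ (aevalTPow m (Q r)) :=
  LieHom.toDirectSum fun r =>
    LieIdeal.factor (twistedIdeal_aeval_le_of_dvd hζ (Finset.dvd_prod_of_mem Q (Finset.mem_univ r)))

theorem twistedQuotientToDirectSum_mk (Q : ι → Polynomial ℂ) (z : twistedLoop m σ ζ) (r : ι) :
    twistedQuotientToDirectSum σ hζ Q (Submodule.Quotient.mk z) r = Submodule.Quotient.mk z :=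
  rfl

variable [DecidableEq ι] {Q : ι → Polynomial ℂ} (hQ : Pairwise (IsCoprime on Q))
include hQ

theorem twistedQuotientToDirectSum_injective :
    Function.Injective (twistedQuotientToDirectSum σ hζ Q) := by
  obtain ⟨E, hE⟩ := exists_forall_dvd_sub_ite hQ
  rw [injective_iff_map_eq_zero]
  intro x hz
  obtain ⟨z, rfl⟩ := Submodule.Quotient.mk_surjective _ x
  have hzQ : ∀ r, ∃ w : twistedLoop m σ ζ, (z : Loop g) = aevalTPow m (Q r) • (w : Loop g) := by
    intro r
    have hr := DFinsupp.ext_iff.1 hz r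
    rw [twistedQuotientToDirectSum_mk] at hr
    obtain ⟨w, hw, hwz⟩ := (Submodule.mem_smul_pointwise_iff_exists _ _ _).1
      ((mem_twistedIdeal_iff hζ).1 ((Submodule.Quotient.mk_eq_zero _).1 hr))
    exact ⟨⟨w, hw⟩, hwz.symm⟩
  choose w hw using hzQ
  have hdecomp : (z : Loop g) = aevalTPow m (-(∑ r, E r - 1)) • (z : Loop g) +
      ∑ r, aevalTPow m (E r * Q r) • (w r : Loop g) := by
    have hEQ : ∀ r, aevalTPow m (E r * Q r) • (w r : Loop g) = aevalTPow m (E r) • (z : Loop g) :=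
      fun r => by rw [map_mul, mul_smul, ← hw]
    rw [Finset.sum_congr rfl fun r _ => hEQ r, ← Finset.sum_smul, ← add_smul, ← map_sum,
      ← map_add, neg_sub, sub_add_cancel, map_one, one_smul]
  refine (Submodule.Quotient.mk_eq_zero _).2 ((mem_twistedIdeal_iff hζ).2 ?_)
  rw [hdecomp]
  exact add_mem (aeval_smul_mem_smul_twistedLoop_of_dvd hζ
      ((prod_dvd_sum_sub_one hQ hE).neg_right) z)
    (sum_mem fun r _ => aeval_smul_mem_smul_twistedLoop_of_dvd hζ (prod_dvd_mul hQ hE r) (w r))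

theorem twistedQuotientToDirectSum_surjective :
    Function.Surjective (twistedQuotientToDirectSum σ hζ Q) := by
  obtain ⟨E, hE⟩ := exists_forall_dvd_sub_ite hQ
  intro y
  choose z hz using fun r => LieSubmodule.Quotient.surjective_mk' _ (y r)
  set x : twistedLoop m σ ζ :=
    ⟨∑ r, aevalTPow m (E r) • (z r : Loop g),
      sum_mem fun r _ => aeval_smul_mem_twistedLoop hζ _ (z r).2⟩
  refine ⟨Submodule.Quotient.mk x, DFinsupp.ext fun s => ?_⟩
  rw [twistedQuotientToDirectSum_mk, ← hz s]
  refine (Submodule.Quotient.eq _).2 ((mem_twistedIdeal_iff hζ).2 ?_)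
  have hdiff : ((x - z s : twistedLoop m σ ζ) : Loop g) = ∑ r,
      aevalTPow m (E r - if r = s then 1 else 0) • (z r : Loop g) := by
    have hterm : ∀ r, aevalTPow m (E r - if r = s then 1 else 0) • (z r : Loop g) =
        aevalTPow m (E r) • (z r : Loop g) -
          aevalTPow m (if r = s then 1 else 0 : Polynomial ℂ) • (z r : Loop g) :=
      fun r => by rw [map_sub]; exact sub_smul _ _ (z r : Loop g)
    have hsingle : ∑ r, aevalTPow m (if r = s then 1 else 0 : Polynomial ℂ) •
        (z r : Loop g) = z s := by
      rw [Fintype.sum_eq_single s fun r hrs => by rw [if_neg hrs, map_zero, zero_smul], if_pos rfl,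
        map_one, one_smul]
    rw [Finset.sum_congr rfl fun r _ => hterm r, Finset.sum_sub_distrib, hsingle]
    rfl
  rw [hdiff]
  exact sum_mem fun r _ => aeval_smul_mem_smul_twistedLoop_of_dvd hζ (hE r s) (z r)

variable (σ) in
def twistedQuotientEquivDirectSum :
    (twistedLoop m σ ζ ⧸ twistedIdeal m σ ζ (aevalTPow m (∏ r, Q r))) ≃ₗ⁅ℂ⁆
      ⨁ r, twistedLoop m σ ζ ⧸ twistedIdeal m σ ζ (aevalTPow m (Q r)) :=
  .ofBijective (twistedQuotientToDirectSum σ hζ Q)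
    ⟨twistedQuotientToDirectSum_injective hζ hQ, twistedQuotientToDirectSum_surjective hζ hQ⟩

end TwistedQuotient

theorem stmt9_general
    (m : ℕ) (σ : g ≃ₗ⁅ℂ⁆ g)
    (ζ : ℂ) (hζ : IsPrimitiveRoot ζ m)
    (ℓ : ℕ) (a : Fin ℓ → ℂ)
    (hinj : Function.Injective fun r => a r ^ m) (N : ℕ) :
    Nonempty
      ((↥(twistedLoop m σ ζ) ⧸
          twistedIdeal m σ ζ (∏ r, (T (m : ℤ) - C (a r ^ m)) ^ N))
        ≃ₗ⁅ℂ⁆ (DirectSum (Fin ℓ) fun r => ↥(twistedLoop m σ ζ) ⧸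
          twistedIdeal m σ ζ ((T (m : ℤ) - C (a r ^ m)) ^ N))) := by
  set Q : Fin ℓ → Polynomial ℂ := fun r => (Polynomial.X - Polynomial.C (a r ^ m)) ^ N
  have hQ : ∀ r, aevalTPow m (Q r) = (T (m : ℤ) - C (a r ^ m)) ^ N := fun r => by
    rw [map_pow, map_sub, Polynomial.aeval_X, Polynomial.aeval_C, C_eq_algebraMap]
  have hcop : Pairwise (IsCoprime on Q) := fun r s hrs =>
    (Polynomial.pairwise_coprime_X_sub_C hinj hrs).pow
  have hprod : aevalTPow m (∏ r, Q r) = ∏ r, (T (m : ℤ) - C (a r ^ m)) ^ N := by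
    simp only [map_prod, hQ]
  -- `rw` cannot reach the summands under the binder of the direct sum, so the family is generalized
  have key : ∀ q : Fin ℓ → LaurentPolynomial ℂ, (fun r => aevalTPow m (Q r)) = q →
      Nonempty ((twistedLoop m σ ζ ⧸ twistedIdeal m σ ζ (∏ r, (T (m : ℤ) - C (a r ^ m)) ^ N))
        ≃ₗ⁅ℂ⁆ ⨁ r, twistedLoop m σ ζ ⧸ twistedIdeal m σ ζ (q r)) := by
    rintro q rfl
    rw [← hprod]
    exact ⟨twistedQuotientEquivDirectSum σ hζ.pow_eq_one hcop⟩
  exact key _ (funext hQ)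

/-- Let `a 1, …, a ℓ` be nonzero complex numbers with `a r ^ m` pairwise
distinct and `N ∈ ℤ₊`.  Then
`L^σ(g)/(⊕_ε g_ε ⊗ t^{m-ε} ∏_k (tᵐ - a_kᵐ)^N ℂ[tᵐ,t⁻ᵐ])` is isomorphic as a Lie algebra
to the direct sum over `r` of `L^σ(g)/(⊕_ε g_ε ⊗ t^{m-ε}(tᵐ - a_rᵐ)^N ℂ[tᵐ,t⁻ᵐ])`. -/
theorem stmt9 [LieAlgebra.IsSimple ℂ g] [FiniteDimensional ℂ g]
    (m : ℕ) (hm : 0 < m) (σ : g ≃ₗ⁅ℂ⁆ g) (hσ : ∀ x, (⇑σ)^[m] x = x)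
    (ζ : ℂ) (hζ : IsPrimitiveRoot ζ m)
    (ℓ : ℕ) (a : Fin ℓ → ℂ) (ha : ∀ r, a r ≠ 0)
    (hinj : Function.Injective fun r => a r ^ m) (N : ℕ) :
    Nonempty
      ((↥(twistedLoop m σ ζ) ⧸
          twistedIdeal m σ ζ (∏ r, (T (m : ℤ) - C (a r ^ m)) ^ N))
        ≃ₗ⁅ℂ⁆ (DirectSum (Fin ℓ) fun r => ↥(twistedLoop m σ ζ) ⧸
          twistedIdeal m σ ζ ((T (m : ℤ) - C (a r ^ m)) ^ N))) :=
  stmt9_general m σ ζ hζ ℓ a hinj N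
end
end
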